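/- Independence of the control variate: for fixed r ∈ A_0 and any two martingales M, M' ∈ M_D, E_j[θ^{low}_j(r,M)] = E_j[θ^{low}_j(r,M')] P-a.s. for every j = 0,...,J; i.e. the conditional expectation E_j[θ^{low}_j(r,M)] does not depend on the choice of the martingale M. -/

import Mathlib

open MeasureTheory
open scoped ENNReal

noncomputable section

variable {Ω : Type*} {m0 : MeasurableSpace Ω}

/-- `L^{∞-}`: membership in `L^p` for every finite `p ≥ 1`. -/
def MemLinfMinus {E : Type*} [NormedAddCommGroup E] (μ : Measure Ω) (f : Ω → E) : Prop :=
  ∀ p : ℝ≥0∞, 1 ≤ p → p ≠ ⊤ → MemLp f p μ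

/-- Euclidean dot product on `Fin D → ℝ`. -/
def dotp {D : ℕ} (x y : Fin D → ℝ) : ℝ := ∑ d, x d * y d

/-- Componentwise conditional expectation of an `ℝ^D`-valued random vector. -/
def cexpV (μ : Measure Ω) (m : MeasurableSpace Ω) {D : ℕ} (f : Ω → Fin D → ℝ) :
    Ω → Fin D → ℝ :=
  fun ω d => (μ[fun ω' => f ω' d|m]) ω

/-- The `ℝ^D`-valued process `β_j Y_j` (vector weight times scalar process). -/
def bprod {D : ℕ} (β : ℕ → Ω → Fin D → ℝ) (Y : ℕ → Ω → ℝ) (j : ℕ) : Ω → Fin D → ℝ :=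
  fun ω d => β j ω d * Y j ω

/-- Convex (Fenchel) conjugate, with values in `EReal`. -/
def econj {D : ℕ} (f : (Fin D → ℝ) → ℝ) (u : Fin D → ℝ) : EReal :=
  ⨆ z : Fin D → ℝ, ((dotp u z - f z : ℝ) : EReal)

/-- Real-valued version of the convex conjugate (meaningful where the conjugate is finite). -/
def rconj {D : ℕ} (f : (Fin D → ℝ) → ℝ) (u : Fin D → ℝ) : ℝ := (econj f u).toReal

/-- The Doob martingale of an `ℝ^D`-valued process `Z`:
`j ↦ ∑_{i=0}^{j-1} (Z_{i+1} - E_i[Z_{i+1}])`. -/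
def doobMart (μ : Measure Ω) (ℱ : Filtration ℕ m0) {D : ℕ} (Z : ℕ → Ω → Fin D → ℝ) :
    ℕ → Ω → Fin D → ℝ :=
  fun j ω d => ∑ i ∈ Finset.range j, (Z (i + 1) ω d - cexpV μ (ℱ i) (Z (i + 1)) ω d)

/-- Standing assumptions on the data `(F, β, ξ)` of the convex dynamic program:
measurability, adaptedness and convexity of the generator, polynomial growth with an
`L^{∞-}` coefficient, and integrability/adaptedness of the weights and terminal condition. -/
structure Setting (μ : Measure Ω) (ℱ : Filtration ℕ m0) (J D : ℕ)
    (F : ℕ → Ω → (Fin D → ℝ) → ℝ) (β : ℕ → Ω → Fin D → ℝ) (ξ : Ω → ℝ) : Prop where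
  F_meas : ∀ j < J, Measurable fun p : Ω × (Fin D → ℝ) => F j p.1 p.2
  F_adapted : ∀ j < J, ∀ z : Fin D → ℝ, StronglyMeasurable[ℱ j] fun ω => F j ω z
  F_convex : ∀ j < J, ∀ ω, ConvexOn ℝ Set.univ (F j ω)
  F_growth : ∃ q : ℝ, 0 ≤ q ∧ ∃ α : ℕ → Ω → ℝ,
      (∀ j < J, StronglyMeasurable[ℱ j] (α j)) ∧
      (∀ j < J, ∀ᵐ ω ∂μ, 0 ≤ α j ω) ∧ (∀ j < J, MemLinfMinus μ (α j)) ∧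
      ∀ j < J, ∀ z : Fin D → ℝ, ∀ᵐ ω ∂μ, |F j ω z| ≤ α j ω * (1 + ‖z‖ ^ q)
  β_adapted : ∀ j ≤ J, StronglyMeasurable[ℱ j] (β j)
  β_int : ∀ j ≤ J, MemLinfMinus μ (β j)
  ξ_meas : StronglyMeasurable[ℱ J] ξ
  ξ_int : MemLinfMinus μ ξ

/-- `Y` is an adapted `L^{∞-}` solution of the dynamic programming equation
`Y_j = F_j(E_j[β_{j+1} Y_{j+1}])`, `Y_J = ξ`. -/
def IsSolution (μ : Measure Ω) (ℱ : Filtration ℕ m0) (J D : ℕ)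
    (F : ℕ → Ω → (Fin D → ℝ) → ℝ) (β : ℕ → Ω → Fin D → ℝ) (ξ : Ω → ℝ)
    (Y : ℕ → Ω → ℝ) : Prop :=
  (∀ j ≤ J, StronglyMeasurable[ℱ j] (Y j) ∧ MemLinfMinus μ (Y j)) ∧
  (∀ᵐ ω ∂μ, Y J ω = ξ ω) ∧
  (∀ j < J, ∀ᵐ ω ∂μ, Y j ω = F j ω (cexpV μ (ℱ j) (bprod β Y (j + 1)) ω))

/-- Supersolution of the dynamic program. -/
def IsSupersolution (μ : Measure Ω) (ℱ : Filtration ℕ m0) (J D : ℕ)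
    (F : ℕ → Ω → (Fin D → ℝ) → ℝ) (β : ℕ → Ω → Fin D → ℝ) (ξ : Ω → ℝ)
    (Y : ℕ → Ω → ℝ) : Prop :=
  (∀ j ≤ J, StronglyMeasurable[ℱ j] (Y j) ∧ MemLinfMinus μ (Y j)) ∧
  (∀ᵐ ω ∂μ, ξ ω ≤ Y J ω) ∧
  (∀ j < J, ∀ᵐ ω ∂μ, F j ω (cexpV μ (ℱ j) (bprod β Y (j + 1)) ω) ≤ Y j ω)

/-- Subsolution of the dynamic program. -/
def IsSubsolution (μ : Measure Ω) (ℱ : Filtration ℕ m0) (J D : ℕ)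
    (F : ℕ → Ω → (Fin D → ℝ) → ℝ) (β : ℕ → Ω → Fin D → ℝ) (ξ : Ω → ℝ)
    (Y : ℕ → Ω → ℝ) : Prop :=
  (∀ j ≤ J, StronglyMeasurable[ℱ j] (Y j) ∧ MemLinfMinus μ (Y j)) ∧
  (∀ᵐ ω ∂μ, Y J ω ≤ ξ ω) ∧
  (∀ j < J, ∀ᵐ ω ∂μ, Y j ω ≤ F j ω (cexpV μ (ℱ j) (bprod β Y (j + 1)) ω))

/-- The monotonicity assumption: `Y⁽¹⁾ ≥ Y⁽²⁾` a.s. implies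
`F_j(β_{j+1} Y⁽¹⁾) ≥ F_j(β_{j+1} Y⁽²⁾)` a.s. -/
def MonoAssumption (μ : Measure Ω) (J D : ℕ)
    (F : ℕ → Ω → (Fin D → ℝ) → ℝ) (β : ℕ → Ω → Fin D → ℝ) : Prop :=
  ∀ j < J, ∀ Y1 Y2 : Ω → ℝ, MemLinfMinus μ Y1 → MemLinfMinus μ Y2 →
    (∀ᵐ ω ∂μ, Y2 ω ≤ Y1 ω) →
    ∀ᵐ ω ∂μ, F j ω (fun d => β (j + 1) ω d * Y2 ω) ≤ F j ω (fun d => β (j + 1) ω d * Y1 ω)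

/-- The class `M_D` of `ℝ^D`-valued `L^{∞-}` martingales. -/
def IsMartD (μ : Measure Ω) (ℱ : Filtration ℕ m0) {D : ℕ}
    (M : ℕ → Ω → Fin D → ℝ) : Prop :=
  Martingale M ℱ μ ∧ ∀ j, MemLinfMinus μ (M j)

/-- Admissible controls on the time indices `{j₀, ..., J-1}` (the class `A_{j₀}`). -/
def IsAdmissibleFrom (μ : Measure Ω) (ℱ : Filtration ℕ m0) (j₀ J D : ℕ)
    (F : ℕ → Ω → (Fin D → ℝ) → ℝ) (r : ℕ → Ω → Fin D → ℝ) : Prop :=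
  ∀ i, j₀ ≤ i → i < J →
    StronglyMeasurable[ℱ i] (r i) ∧ MemLinfMinus μ (r i) ∧
    (∀ᵐ ω ∂μ, econj (F i ω) (r i ω) ≠ ⊤) ∧
    MemLinfMinus μ (fun ω => rconj (F i ω) (r i ω))

/-- The lower pathwise recursion `θ^{low}(r, M)`:
`θ_J = ξ`, `θ_i = r_i^⊤ (β_{i+1} θ_{i+1}) - r_i^⊤ ΔM_{i+1} - F_i^{#}(r_i)`,
required on the time indices `{j₀, ..., J-1}`. -/
def IsThetaLowFrom (μ : Measure Ω) (j₀ J D : ℕ)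
    (F : ℕ → Ω → (Fin D → ℝ) → ℝ) (β : ℕ → Ω → Fin D → ℝ) (ξ : Ω → ℝ)
    (r M : ℕ → Ω → Fin D → ℝ) (θ : ℕ → Ω → ℝ) : Prop :=
  (∀ᵐ ω ∂μ, θ J ω = ξ ω) ∧
  ∀ i, j₀ ≤ i → i < J → ∀ᵐ ω ∂μ,
    θ i ω = dotp (r i ω) (fun d => β (i + 1) ω d * θ (i + 1) ω)
      - dotp (r i ω) (fun d => M (i + 1) ω d - M i ω d) - rconj (F i ω) (r i ω)

/-- The upper pathwise recursion `θ^{up}(M)`: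
`θ_J = ξ`, `θ_j = F_j(β_{j+1} θ_{j+1} - ΔM_{j+1})`. -/
def IsThetaUp (μ : Measure Ω) (J D : ℕ)
    (F : ℕ → Ω → (Fin D → ℝ) → ℝ) (β : ℕ → Ω → Fin D → ℝ) (ξ : Ω → ℝ)
    (M : ℕ → Ω → Fin D → ℝ) (θ : ℕ → Ω → ℝ) : Prop :=
  (∀ᵐ ω ∂μ, θ J ω = ξ ω) ∧
  ∀ j < J, ∀ᵐ ω ∂μ,
    θ j ω = F j ω (fun d => β (j + 1) ω d * θ (j + 1) ω - (M (j + 1) ω d - M j ω d))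

/-- The optimality condition `r_i^⊤ E_i[β_{i+1} Y_{i+1}] - F_i^{#}(r_i) = F_i(E_i[β_{i+1} Y_{i+1}])`
on the time indices `{j₀, ..., J-1}`. -/
def OptimalityCond (μ : Measure Ω) (ℱ : Filtration ℕ m0) (j₀ J D : ℕ)
    (F : ℕ → Ω → (Fin D → ℝ) → ℝ) (β : ℕ → Ω → Fin D → ℝ)
    (Y : ℕ → Ω → ℝ) (r : ℕ → Ω → Fin D → ℝ) : Prop :=
  ∀ i, j₀ ≤ i → i < J → ∀ᵐ ω ∂μ,
    dotp (r i ω) (cexpV μ (ℱ i) (bprod β Y (i + 1)) ω) - rconj (F i ω) (r i ω)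
      = F i ω (cexpV μ (ℱ i) (bprod β Y (i + 1)) ω)


/-!
Backward induction on `j`. For every martingale `M`, `E_j[r_j^⊤ (M_{j+1} - M_j)] = 0`; by the
tower property and pulling out the `ℱ_{j+1}`-measurable factor `r_j^⊤ β_{j+1}`,
`E_j[θ_j] = E_j[r_j^⊤ β_{j+1} E_{j+1}[θ_{j+1}]] - E_j[F_j^#(r_j)]`.
So `E_j[θ_j]` depends on `M` only through `E_{j+1}[θ_{j+1}]`, which by induction does not
depend on `M` at all.
-/

open Filter

namespace MemLinfMinus

variable {μ : Measure Ω}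

theorem integrable {E : Type*} [NormedAddCommGroup E] {f : Ω → E} (hf : MemLinfMinus μ f) :
    Integrable f μ :=
  memLp_one_iff_integrable.mp (hf 1 le_rfl ENNReal.one_ne_top)

theorem congr {E : Type*} [NormedAddCommGroup E] {f g : Ω → E} (hf : MemLinfMinus μ f)
    (h : f =ᵐ[μ] g) : MemLinfMinus μ g :=
  fun p hp hp_top => (hf p hp hp_top).ae_eq h

theorem sub {E : Type*} [NormedAddCommGroup E] {f g : Ω → E} (hf : MemLinfMinus μ f)
    (hg : MemLinfMinus μ g) : MemLinfMinus μ (f - g) :=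
  fun p hp hp_top => (hf p hp hp_top).sub (hg p hp hp_top)

theorem eval {ι : Type*} [Fintype ι] {E : ι → Type*} [∀ i, NormedAddCommGroup (E i)]
    {f : Ω → ∀ i, E i} (hf : MemLinfMinus μ f) (i : ι) : MemLinfMinus μ (fun ω => f ω i) :=
  fun p hp hp_top => (hf p hp hp_top).eval i

theorem mul {𝕜 : Type*} [NormedRing 𝕜] {f g : Ω → 𝕜} (hf : MemLinfMinus μ f)
    (hg : MemLinfMinus μ g) : MemLinfMinus μ (f * g) := by
  intro p hp hp_top
  have h2p : 1 ≤ 2 * p := hp.trans (by rw [two_mul]; exact le_self_add)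
  have h2p_top : 2 * p ≠ ⊤ := ENNReal.mul_ne_top ENNReal.ofNat_ne_top hp_top
  have : ENNReal.HolderTriple (2 * p) (2 * p) p := ⟨by
    rw [← two_mul, ENNReal.mul_inv (by simp) (by simp), ← mul_assoc,
      ENNReal.mul_inv_cancel (by simp) (by simp), one_mul]⟩
  exact (hg (2 * p) h2p h2p_top).mul (hf (2 * p) h2p h2p_top)

theorem finsetSum {ι E : Type*} [NormedAddCommGroup E] (s : Finset ι) {f : ι → Ω → E}
    (hf : ∀ i ∈ s, MemLinfMinus μ (f i)) : MemLinfMinus μ (fun ω => ∑ i ∈ s, f i ω) :=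
  fun p hp hp_top => memLp_finsetSum s fun i hi => hf i hi p hp hp_top

theorem dotp {D : ℕ} {x y : Ω → Fin D → ℝ} (hx : MemLinfMinus μ x) (hy : MemLinfMinus μ y) :
    MemLinfMinus μ (fun ω => dotp (x ω) (y ω)) :=
  finsetSum _ fun d _ => (hx.eval d).mul (hy.eval d)

end MemLinfMinus

theorem dotp_mul_right {D : ℕ} (x y : Fin D → ℝ) (c : ℝ) :
    dotp x (fun d => y d * c) = dotp x y * c := by
  simp only [dotp, Finset.sum_mul, mul_assoc]

theorem continuous_dotp {D : ℕ} :
    Continuous fun p : (Fin D → ℝ) × (Fin D → ℝ) => dotp p.1 p.2 := by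
  unfold dotp
  fun_prop

theorem condExp_mul_eq_condExp_mul_condExp {m₁ m₂ : MeasurableSpace Ω} {μ : @Measure Ω m0}
    (hm₁₂ : m₁ ≤ m₂) (hm₂ : m₂ ≤ m0) [SigmaFinite (μ.trim hm₂)] {g f : Ω → ℝ}
    (hg : StronglyMeasurable[m₂] g) (hgf : Integrable (g * f) μ) (hf : Integrable f μ) :
    μ[g * f|m₁] =ᵐ[μ] μ[g * μ[f|m₂]|m₁] :=
  (condExp_condExp_of_le hm₁₂ hm₂).symm.trans
    (condExp_congr_ae (condExp_mul_of_stronglyMeasurable_left hg hgf hf))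

namespace Martingale

variable {ι : Type*} [Preorder ι] {ℱ : Filtration ι m0} {μ : Measure Ω}

theorem eval {κ : Type*} [Fintype κ] {M : ι → Ω → κ → ℝ} (hM : Martingale M ℱ μ) (k : κ) :
    Martingale (fun i ω => M i ω k) ℱ μ := by
  refine ⟨fun i => (continuous_apply k).comp_stronglyMeasurable (hM.stronglyAdapted i),
    fun i j hij => ?_⟩
  filter_upwards [(ContinuousLinearMap.proj (R := ℝ) (φ := fun _ : κ => ℝ) k).comp_condExp_comm
      (hM.integrable j) (m := ℱ i), hM.condExp_ae_eq hij] with ω h_comm h_mart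
  simp only [Function.comp_apply, ContinuousLinearMap.proj_apply, h_mart] at h_comm
  exact h_comm.symm

theorem condExp_dotp_sub_eq_zero {D : ℕ} {M : ι → Ω → Fin D → ℝ} (hM : Martingale M ℱ μ)
    {i j : ι} (hij : i ≤ j) {R : Ω → Fin D → ℝ} (hR : StronglyMeasurable[ℱ i] R)
    (hint : ∀ d, Integrable (fun ω => R ω d * (M j ω d - M i ω d)) μ) :
    μ[fun ω => dotp (R ω) (fun d => M j ω d - M i ω d)|ℱ i] =ᵐ[μ] 0 := by
  have h_term : ∀ d, μ[fun ω => R ω d * (M j ω d - M i ω d)|ℱ i] =ᵐ[μ] 0 := by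
    intro d
    have hMd := Martingale.eval hM d
    have h_incr : μ[fun ω => M j ω d - M i ω d|ℱ i] =ᵐ[μ] 0 := by
      filter_upwards [condExp_sub (hMd.integrable j) (hMd.integrable i) (ℱ i),
        hMd.condExp_ae_eq hij, hMd.condExp_ae_eq (le_refl i)] with ω h_sub h_j h_i
      exact h_sub.trans (by simp [h_j, h_i])
    filter_upwards [condExp_mul_of_stronglyMeasurable_left
        ((continuous_apply d).comp_stronglyMeasurable hR) (hint d)
        ((hMd.integrable j).sub (hMd.integrable i)), h_incr] with ω h_pull h_zero
    exact h_pull.trans (by simp [h_zero])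
  have h_sum : (fun ω => dotp (R ω) (fun d => M j ω d - M i ω d))
      = ∑ d, fun ω => R ω d * (M j ω d - M i ω d) := by
    ext ω
    simp [dotp]
  rw [h_sum]
  filter_upwards [condExp_finsetSum (s := Finset.univ) (fun d _ => hint d) (ℱ i),
    ae_all_iff.2 h_term] with ω h_lin h_zero
  simp_all

end Martingale

namespace IsThetaLowFrom

variable {μ : Measure Ω} {ℱ : Filtration ℕ m0} {j₀ J D : ℕ} {F : ℕ → Ω → (Fin D → ℝ) → ℝ}
  {β : ℕ → Ω → Fin D → ℝ} {ξ : Ω → ℝ} {r M : ℕ → Ω → Fin D → ℝ} {θ : ℕ → Ω → ℝ}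

theorem ae_eq_step (hθ : IsThetaLowFrom μ j₀ J D F β ξ r M θ) {j : ℕ} (hj₀ : j₀ ≤ j)
    (hjJ : j < J) :
    θ j =ᵐ[μ] (fun ω => dotp (r j ω) (β (j + 1) ω)) * θ (j + 1)
      - (fun ω => dotp (r j ω) (fun d => M (j + 1) ω d - M j ω d))
      - (fun ω => rconj (F j ω) (r j ω)) := by
  filter_upwards [hθ.2 j hj₀ hjJ] with ω h
  simp only [h, dotp_mul_right, Pi.sub_apply, Pi.mul_apply]

theorem memLinfMinus (hβ : ∀ j ≤ J, MemLinfMinus μ (β j)) (hξ : MemLinfMinus μ ξ)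
    (hr : IsAdmissibleFrom μ ℱ j₀ J D F r) (hM : ∀ j, MemLinfMinus μ (M j))
    (hθ : IsThetaLowFrom μ j₀ J D F β ξ r M θ) {j : ℕ} (hj₀ : j₀ ≤ j) (hjJ : j ≤ J) :
    MemLinfMinus μ (θ j) := by
  induction hjJ using Nat.decreasingInduction with
  | self => exact hξ.congr (EventuallyEq.symm hθ.1)
  | of_succ k hk ih =>
    obtain ⟨-, hr_int, -, h_conj⟩ := hr k hj₀ hk
    exact ((((hr_int.dotp (hβ (k + 1) hk)).mul (ih (hj₀.trans k.le_succ))).sub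
      (hr_int.dotp ((hM (k + 1)).sub (hM k)))).sub h_conj).congr (hθ.ae_eq_step hj₀ hk).symm

theorem condExp_ae_eq (hθ : IsThetaLowFrom μ j₀ J D F β ξ r M θ)
    (hr : IsAdmissibleFrom μ ℱ j₀ J D F r) (hM : IsMartD μ ℱ M) {j : ℕ} (hj₀ : j₀ ≤ j)
    (hjJ : j < J) [SigmaFinite (μ.trim (ℱ.le (j + 1)))]
    (hβ_meas : StronglyMeasurable[ℱ (j + 1)] (β (j + 1))) (hβ : MemLinfMinus μ (β (j + 1)))
    (hθ_succ : MemLinfMinus μ (θ (j + 1))) :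
    μ[θ j|ℱ j] =ᵐ[μ] μ[(fun ω => dotp (r j ω) (β (j + 1) ω)) * μ[θ (j + 1)|ℱ (j + 1)]|ℱ j]
      - μ[fun ω => rconj (F j ω) (r j ω)|ℱ j] := by
  obtain ⟨hr_meas, hr_int, -, h_conj⟩ := hr j hj₀ hjJ
  have hg_meas : StronglyMeasurable[ℱ (j + 1)] fun ω => dotp (r j ω) (β (j + 1) ω) :=
    continuous_dotp.comp_stronglyMeasurable ((hr_meas.mono (ℱ.mono j.le_succ)).prodMk hβ_meas)
  have hg := hr_int.dotp hβ
  have hΔ := hr_int.dotp ((hM.2 (j + 1)).sub (hM.2 j))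
  calc μ[θ j|ℱ j]
      =ᵐ[μ] μ[(fun ω => dotp (r j ω) (β (j + 1) ω)) * θ (j + 1)|ℱ j]
        - μ[fun ω => dotp (r j ω) (fun d => M (j + 1) ω d - M j ω d)|ℱ j]
        - μ[fun ω => rconj (F j ω) (r j ω)|ℱ j] :=
      (condExp_congr_ae (hθ.ae_eq_step hj₀ hjJ)).trans <|
        (condExp_sub ((hg.mul hθ_succ).sub hΔ).integrable h_conj.integrable _).trans <|
          (condExp_sub (hg.mul hθ_succ).integrable hΔ.integrable _).sub .rfl
    _ =ᵐ[μ] μ[(fun ω => dotp (r j ω) (β (j + 1) ω)) * μ[θ (j + 1)|ℱ (j + 1)]|ℱ j] - 0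
        - μ[fun ω => rconj (F j ω) (r j ω)|ℱ j] :=
      ((condExp_mul_eq_condExp_mul_condExp (ℱ.mono j.le_succ) (ℱ.le (j + 1)) hg_meas
          (hg.mul hθ_succ).integrable hθ_succ.integrable).sub
        (Martingale.condExp_dotp_sub_eq_zero hM.1 j.le_succ hr_meas fun d =>
          ((hr_int.eval d).mul (((hM.2 (j + 1)).sub (hM.2 j)).eval d)).integrable)).sub .rfl
    _ = _ := by rw [sub_zero]

end IsThetaLowFrom

/-- Independence of the control variate: for a fixed admissible control
`r ∈ A_0` and any two martingales `M, M' ∈ M_D`,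
`E_j[θ^{low}_j(r,M)] = E_j[θ^{low}_j(r,M')]` `P`-a.s. for every `j = 0,…,J`. -/
theorem thetaLow_condexp_independent_of_martingale
    (μ : Measure Ω) [IsProbabilityMeasure μ] (ℱ : Filtration ℕ m0)
    (J D : ℕ) (F : ℕ → Ω → (Fin D → ℝ) → ℝ) (β : ℕ → Ω → Fin D → ℝ) (ξ : Ω → ℝ)
    (hset : Setting μ ℱ J D F β ξ)
    (r : ℕ → Ω → Fin D → ℝ) (hr : IsAdmissibleFrom μ ℱ 0 J D F r)
    (M M' : ℕ → Ω → Fin D → ℝ) (hM : IsMartD μ ℱ M) (hM' : IsMartD μ ℱ M')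
    (θ θ' : ℕ → Ω → ℝ)
    (hθ : IsThetaLowFrom μ 0 J D F β ξ r M θ)
    (hθ' : IsThetaLowFrom μ 0 J D F β ξ r M' θ') :
    ∀ j ≤ J, (μ[θ j|ℱ j]) =ᵐ[μ] (μ[θ' j|ℱ j]) := by
  intro j hj
  induction hj using Nat.decreasingInduction with
  | self => exact condExp_congr_ae (EventuallyEq.trans hθ.1 (EventuallyEq.symm hθ'.1))
  | of_succ k hk ih =>
    have hθ_succ := hθ.memLinfMinus hset.β_int hset.ξ_int hr hM.2 k.succ.zero_le hk
    have hθ'_succ := hθ'.memLinfMinus hset.β_int hset.ξ_int hr hM'.2 k.succ.zero_le hk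
    have h_step := hθ.condExp_ae_eq hr hM k.zero_le hk (hset.β_adapted _ hk)
      (hset.β_int _ hk) hθ_succ
    have h_step' := hθ'.condExp_ae_eq hr hM' k.zero_le hk (hset.β_adapted _ hk)
      (hset.β_int _ hk) hθ'_succ
    exact h_step.trans (((condExp_congr_ae (EventuallyEq.rfl.mul ih)).sub .rfl).trans h_step'.symm)

end
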